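/- (NPG regret lemma) Consider a finite discounted MDP and a parameterized policy class {π_θ : θ ∈ ℝ^d} of everywhere-positive stochastic policies such that, for each s and a, the map θ ↦ log π_θ(a|s) is differentiable with β-Lipschitz gradient (β-smooth). Fix a comparison policy π̃ and a state distribution ρ. Let θ^{(t+1)} = θ^{(t)} + η w^{(t)} with η > 0, where π_{θ^{(0)}}(·|s) is the uniform distribution for every s, and ‖w^{(t)}‖₂ ≤ W for every t. Writing π^{(t)} = π_{θ^{(t)}}, A^{(t)} = A^{π^{(t)}}, d̃ = d^{π̃}_ρ, and err_t = E_{s∼d̃} E_{a∼π̃(·|s)} [ A^{(t)}(s,a) − w^{(t)}·∇_θ log π^{(t)}(a|s) ], one has: min_{t<T} { V^{π̃}(ρ) − V^{π^{(t)}}(ρ) } ≤ (1/(1−γ)) · ( log|A|/(η T) + η β W²/2 + (1/T) Σ_{t=0}^{T−1} err_t ). -/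

import Mathlib

open scoped BigOperators InnerProductSpace

/-- A finite Markov decision process (the data only: transition probabilities `P`,
rewards `r`, and discount factor `γ`). -/
structure FinMDP where
  S : Type
  A : Type
  [fS : Fintype S]
  [dS : DecidableEq S]
  [fA : Fintype A]
  [dA : DecidableEq A]
  P : S → A → S → ℝ
  r : S → A → ℝ
  γ : ℝ

attribute [instance] FinMDP.fS FinMDP.dS FinMDP.fA FinMDP.dA

/-- `μ` is a probability distribution on the finite type `X`. -/
def IsDist {X : Type*} [Fintype X] (μ : X → ℝ) : Prop :=
  (∀ x, 0 ≤ μ x) ∧ ∑ x, μ x = 1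

namespace FinMDP

variable (M : FinMDP)

/-- The MDP data is well formed: `P` is a transition kernel, rewards lie in `[0,1]`,
and `γ ∈ [0,1)`. -/
def Valid : Prop :=
  (∀ s a s', 0 ≤ M.P s a s') ∧ (∀ s a, ∑ s', M.P s a s' = 1) ∧
    (∀ s a, 0 ≤ M.r s a ∧ M.r s a ≤ 1) ∧ 0 ≤ M.γ ∧ M.γ < 1

/-- `π` is a stochastic policy: `π s a` is the probability `π(a|s)`. -/
def IsPolicy (π : M.S → M.A → ℝ) : Prop :=
  (∀ s a, 0 ≤ π s a) ∧ ∀ s, ∑ a, π s a = 1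

/-- State-to-state transition matrix induced by a policy. -/
noncomputable def Pmat (π : M.S → M.A → ℝ) : Matrix M.S M.S ℝ :=
  Matrix.of fun s s' => ∑ a, π s a * M.P s a s'

/-- Expected one-step reward under a policy. -/
noncomputable def rPol (π : M.S → M.A → ℝ) (s : M.S) : ℝ :=
  ∑ a, π s a * M.r s a

/-- The value function `V^π(s₀) = E[∑ₜ γ^t r(s_t, a_t)]`. -/
noncomputable def V (π : M.S → M.A → ℝ) (s₀ : M.S) : ℝ :=
  ∑' t : ℕ, M.γ ^ t * ((M.Pmat π ^ t).mulVec (M.rPol π)) s₀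

/-- `V^π(ρ)` for a starting state distribution `ρ`. -/
noncomputable def Vd (π : M.S → M.A → ℝ) (ρ : M.S → ℝ) : ℝ :=
  ∑ s, ρ s * M.V π s

/-- The action-value function `Q^π(s,a)`. -/
noncomputable def Qf (π : M.S → M.A → ℝ) (s : M.S) (a : M.A) : ℝ :=
  M.r s a + M.γ * ∑ s', M.P s a s' * M.V π s'

/-- The advantage function `A^π(s,a) = Q^π(s,a) - V^π(s)`. -/
noncomputable def Adv (π : M.S → M.A → ℝ) (s : M.S) (a : M.A) : ℝ :=
  M.Qf π s a - M.V π s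

/-- Discounted state visitation distribution `d^π_{s₀}(s)`. -/
noncomputable def dvisit (π : M.S → M.A → ℝ) (s₀ s : M.S) : ℝ :=
  (1 - M.γ) * ∑' t : ℕ, M.γ ^ t * (M.Pmat π ^ t) s₀ s

/-- Discounted state visitation distribution `d^π_μ(s)` for a starting distribution `μ`. -/
noncomputable def dvisitD (π : M.S → M.A → ℝ) (μ : M.S → ℝ) (s : M.S) : ℝ :=
  ∑ s₀, μ s₀ * M.dvisit π s₀ s

/-- State-action transition matrix induced by a policy. -/
noncomputable def PmatSA (π : M.S → M.A → ℝ) :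
    Matrix (M.S × M.A) (M.S × M.A) ℝ :=
  Matrix.of fun p q => M.P p.1 p.2 q.1 * π q.1 q.2

/-- Discounted state-action visitation measure `d^π_ν(s,a)` started from `(s₀,a₀) ∼ ν`,
executing `a₀` first and following `π` thereafter. -/
noncomputable def dvisitSA (π : M.S → M.A → ℝ) (ν : M.S × M.A → ℝ)
    (p : M.S × M.A) : ℝ :=
  (1 - M.γ) * ∑' t : ℕ, M.γ ^ t * ∑ p₀, ν p₀ * (M.PmatSA π ^ t) p₀ p

/-- The softmax policy `π_θ(a|s) = exp(θ_{s,a}) / ∑_{a'} exp(θ_{s,a'})`. -/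
noncomputable def softmaxPolicy (θ : EuclideanSpace ℝ (M.S × M.A)) :
    M.S → M.A → ℝ :=
  fun s a => Real.exp (θ (s, a)) / ∑ a', Real.exp (θ (s, a'))

end FinMDP

/-!
The potential `Φₜ = E_{s∼d̃} KL(π̃(·|s) ‖ π⁽ᵗ⁾(·|s))` is nonnegative and starts below `log |A|`,
since `π⁽⁰⁾` is uniform. By `β`-smoothness of `log π_θ(a|s)`, one step of the update raises
`log π⁽ᵗ⁾(a|s)` by at least `η w⁽ᵗ⁾·∇ log π⁽ᵗ⁾(a|s) - η²βW²/2`. Average this under `d̃ × π̃`: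
by the performance difference lemma `(1-γ)(V^{π̃}(ρ) - V⁽ᵗ⁾(ρ)) = E_{d̃,π̃}[A⁽ᵗ⁾]`, this gives
`η(1-γ)(V^{π̃}(ρ) - V⁽ᵗ⁾(ρ)) ≤ Φₜ - Φₜ₊₁ + η(errₜ + ηβW²/2)`. Summing over `t < T`
telescopes `Φ`, and the smallest gap is at most the average one.

The performance difference lemma is linear algebra: `V^π = (1 - γP_π)⁻¹ r_π` and
`d^π_ρ = (1-γ) ρᵀ(1 - γP_π)⁻¹`, where `P_π` is row-stochastic.
-/

open Finset Matrix

section Smooth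

variable {E : Type*} [NormedAddCommGroup E] [InnerProductSpace ℝ E] [CompleteSpace E]

theorem add_inner_gradient_sub_le_of_lipschitz {f : E → ℝ} {β : ℝ} (hf : Differentiable ℝ f)
    (hlip : ∀ x y, ‖gradient f x - gradient f y‖ ≤ β * ‖x - y‖) (x v : E) :
    f x + ⟪gradient f x, v⟫_ℝ - β / 2 * ‖v‖ ^ 2 ≤ f (x + v) := by
  set g : ℝ → ℝ := fun t => f (x + t • v) - t * ⟪gradient f x, v⟫_ℝ + β / 2 * t ^ 2 * ‖v‖ ^ 2
  have hderiv : ∀ t, HasDerivAt g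
      (⟪gradient f (x + t • v) - gradient f x, v⟫_ℝ + β * t * ‖v‖ ^ 2) t := by
    intro t
    have hline : HasDerivAt (fun t : ℝ => x + t • v) v t := by
      simpa using ((hasDerivAt_id t).smul_const v).const_add x
    have hf' := (hf (x + t • v)).hasGradientAt.hasFDerivAt.comp_hasDerivAt t hline
    refine ((hf'.sub ((hasDerivAt_id t).mul_const ⟪gradient f x, v⟫_ℝ)).add
      (((hasDerivAt_pow 2 t).const_mul (β / 2)).mul_const (‖v‖ ^ 2))).congr_deriv ?_
    simp only [InnerProductSpace.toDual_apply_apply, inner_sub_left]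
    push_cast
    ring
  -- `g' ≥ 0` on `(0, 1)` by Cauchy–Schwarz and the Lipschitz bound, so `g 0 ≤ g 1`
  have hmono : MonotoneOn g (Set.Icc 0 1) := by
    refine monotoneOn_of_hasDerivWithinAt_nonneg (convex_Icc 0 1)
      (fun t _ => (hderiv t).continuousAt.continuousWithinAt)
      (fun t _ => (hderiv t).hasDerivWithinAt) fun t ht => ?_
    rw [interior_Icc] at ht
    have hgrad := hlip (x + t • v) x
    rw [add_sub_cancel_left, norm_smul, Real.norm_of_nonneg ht.1.le] at hgrad
    nlinarith [neg_abs_le ⟪gradient f (x + t • v) - gradient f x, v⟫_ℝ,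
      abs_real_inner_le_norm (gradient f (x + t • v) - gradient f x) v,
      mul_le_mul_of_nonneg_right hgrad (norm_nonneg v)]
  have := hmono (Set.left_mem_Icc.2 zero_le_one) (Set.right_mem_Icc.2 zero_le_one) zero_le_one
  simp only [g, zero_smul, add_zero, zero_mul, one_smul, one_mul] at this
  linarith

theorem mul_inner_gradient_sub_le_of_lipschitz {f : E → ℝ} {β η W : ℝ} (hf : Differentiable ℝ f)
    (hlip : ∀ x y, ‖gradient f x - gradient f y‖ ≤ β * ‖x - y‖) (hβ : 0 ≤ β) (hη : 0 ≤ η)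
    (x : E) {w : E} (hw : ‖w‖ ≤ W) :
    η * (⟪w, gradient f x⟫_ℝ - η * β * W ^ 2 / 2) ≤ f (x + η • w) - f x := by
  have h := add_inner_gradient_sub_le_of_lipschitz hf hlip x (η • w)
  have hw2 : ‖η • w‖ ^ 2 ≤ η ^ 2 * W ^ 2 := by
    rw [norm_smul, Real.norm_of_nonneg hη, mul_pow]
    gcongr
  rw [real_inner_smul_right, real_inner_comm] at h
  nlinarith [mul_le_mul_of_nonneg_left hw2 (by positivity : 0 ≤ β / 2)]

end Smooth

section Entropy

open Real

variable {X : Type*} [Fintype X] {p q : X → ℝ}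

theorem mul_log_sub_log_le_sub {a b : ℝ} (ha : 0 ≤ a) (hb : 0 < b) :
    a * (log b - log a) ≤ b - a := by
  rcases ha.eq_or_lt with rfl | ha
  · simpa using hb.le
  have h := mul_le_mul_of_nonneg_left (log_le_sub_one_of_pos (div_pos hb ha)) ha.le
  rwa [log_div hb.ne' ha.ne', mul_sub_one, mul_div_cancel₀ b ha.ne'] at h

theorem IsDist.sum_mul_log_sub_log_nonneg (hp : IsDist p) (hq : IsDist q)
    (hq₀ : ∀ x, 0 < q x) : 0 ≤ ∑ x, p x * (log (p x) - log (q x)) := by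
  have h : ∑ x, p x * (log (q x) - log (p x)) ≤ ∑ x, (q x - p x) :=
    sum_le_sum fun x _ => mul_log_sub_log_le_sub (hp.1 x) (hq₀ x)
  rw [sum_sub_distrib, hp.2, hq.2, sub_self] at h
  have : ∑ x, p x * (log (p x) - log (q x)) = -∑ x, p x * (log (q x) - log (p x)) := by
    rw [← sum_neg_distrib]
    exact sum_congr rfl fun x _ => by ring
  linarith

theorem IsDist.sum_mul_log_sub_log_uniform_le (hp : IsDist p) :
    ∑ x, p x * (log (p x) - log (1 / Fintype.card X)) ≤ log (Fintype.card X) := by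
  have hp₁ : ∀ x, p x ≤ 1 := fun x =>
    hp.2 ▸ single_le_sum (fun y _ => hp.1 y) (mem_univ x)
  calc ∑ x, p x * (log (p x) - log (1 / Fintype.card X))
      = ∑ x, p x * log (p x) + (∑ x, p x) * log (Fintype.card X) := by
        rw [one_div, log_inv, sum_mul, ← sum_add_distrib]
        exact sum_congr rfl fun x _ => by ring
    _ ≤ 0 + 1 * log (Fintype.card X) := by
        rw [hp.2]
        gcongr
        exact sum_nonpos fun x _ => mul_log_nonpos (hp.1 x) (hp₁ x)
    _ = log (Fintype.card X) := by ring

end Entropy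

section Mean

variable {S A : Type*} [Fintype S] [Fintype A] {d : S → ℝ} {q : S → A → ℝ}

def stateActionMean (d : S → ℝ) (q : S → A → ℝ) (F : S → A → ℝ) : ℝ :=
  ∑ s, d s * ∑ a, q s a * F s a

theorem stateActionMean_sub (F G : S → A → ℝ) :
    stateActionMean d q (fun s a => F s a - G s a) =
      stateActionMean d q F - stateActionMean d q G := by
  simp only [stateActionMean, mul_sub, sum_sub_distrib]

theorem stateActionMean_mul_sub_const (hd : IsDist d) (hq : ∀ s, ∑ a, q s a = 1)
    (F : S → A → ℝ) (η c : ℝ) :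
    stateActionMean d q (fun s a => η * (F s a - c)) = η * (stateActionMean d q F - c) := by
  simp only [stateActionMean, mul_sub, sum_sub_distrib, ← sum_mul, hq, one_mul, mul_sum]
  rw [hd.2, one_mul]
  exact congrArg (· - _) (sum_congr rfl fun s _ => sum_congr rfl fun a _ => by ring)

theorem stateActionMean_mono (hd : ∀ s, 0 ≤ d s) (hq : ∀ s a, 0 ≤ q s a) {F G : S → A → ℝ}
    (h : ∀ s a, F s a ≤ G s a) : stateActionMean d q F ≤ stateActionMean d q G :=
  sum_le_sum fun s _ => mul_le_mul_of_nonneg_left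
    (sum_le_sum fun a _ => mul_le_mul_of_nonneg_left (h s a) (hq s a)) (hd s)

open Real in
noncomputable def expectedKL (d : S → ℝ) (q p : S → A → ℝ) : ℝ :=
  stateActionMean d q fun s a => log (q s a) - log (p s a)

theorem expectedKL_nonneg {p : S → A → ℝ} (hd : ∀ s, 0 ≤ d s) (hq : ∀ s, IsDist (q s))
    (hp : ∀ s, IsDist (p s)) (hp₀ : ∀ s a, 0 < p s a) : 0 ≤ expectedKL d q p :=
  sum_nonneg fun s _ =>
    mul_nonneg (hd s) ((hq s).sum_mul_log_sub_log_nonneg (hp s) (hp₀ s))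

theorem expectedKL_uniform_le (hd : IsDist d) (hq : ∀ s, IsDist (q s)) :
    expectedKL d q (fun _ _ => 1 / Fintype.card A) ≤ Real.log (Fintype.card A) := by
  calc expectedKL d q (fun _ _ => 1 / Fintype.card A)
      ≤ ∑ s, d s * Real.log (Fintype.card A) :=
        sum_le_sum fun s _ =>
          mul_le_mul_of_nonneg_left (hq s).sum_mul_log_sub_log_uniform_le (hd.1 s)
    _ = Real.log (Fintype.card A) := by rw [← sum_mul, hd.2, one_mul]

theorem expectedKL_sub_expectedKL (p p' : S → A → ℝ) :
    expectedKL d q p - expectedKL d q p' =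
      stateActionMean d q fun s a => Real.log (p' s a) - Real.log (p s a) := by
  rw [expectedKL, expectedKL, ← stateActionMean_sub]
  congr 1
  funext s a
  ring

end Mean

theorem exists_lt_le_of_potential_decrease {Φ u e : ℕ → ℝ} {η c B : ℝ} {T : ℕ} (hη : 0 < η)
    (hT : 0 < T) (hΦ : ∀ t, 0 ≤ Φ t) (hΦ₀ : Φ 0 ≤ B)
    (hstep : ∀ t, η * u t ≤ Φ t - Φ (t + 1) + η * (e t + c)) :
    ∃ t < T, u t ≤ B / (η * T) + c + (1 / T) * ∑ t ∈ range T, e t := by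
  obtain ⟨t₀, ht₀, hmin⟩ := exists_min_image (range T) u ⟨0, mem_range.2 hT⟩
  refine ⟨t₀, mem_range.1 ht₀, ?_⟩
  have hsum : η * (T * u t₀) ≤ B + η * (∑ t ∈ range T, e t + T * c) := by
    calc η * (T * u t₀) = ∑ t ∈ range T, η * u t₀ := by
          rw [sum_const, card_range, nsmul_eq_mul]; ring
      _ ≤ ∑ t ∈ range T, (Φ t - Φ (t + 1) + η * (e t + c)) :=
        sum_le_sum fun t ht => (mul_le_mul_of_nonneg_left (hmin t ht) hη.le).trans (hstep t)
      _ = Φ 0 - Φ T + η * (∑ t ∈ range T, e t + T * c) := by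
        rw [sum_add_distrib, sum_range_sub', ← mul_sum, sum_add_distrib]
        simp
      _ ≤ B + η * (∑ t ∈ range T, e t + T * c) := by linarith [hΦ T]
  have hηT : 0 < η * T := mul_pos hη (Nat.cast_pos.2 hT)
  calc u t₀ = η * (T * u t₀) / (η * T) := by field_simp
    _ ≤ (B + η * (∑ t ∈ range T, e t + T * c)) / (η * T) := by gcongr
    _ = B / (η * T) + c + (1 / T) * ∑ t ∈ range T, e t := by field_simp; ring

section Resolvent

variable {n : Type*} [Fintype n] [DecidableEq n] {P : Matrix n n ℝ} {γ : ℝ}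

theorem summable_pow_smul_of_mem_rowStochastic (hP : P ∈ rowStochastic ℝ n) (hγ₀ : 0 ≤ γ)
    (hγ₁ : γ < 1) : Summable fun t : ℕ => (γ • P) ^ t := by
  refine Pi.summable.2 fun i => Pi.summable.2 fun j => ?_
  refine (summable_geometric_of_lt_one hγ₀ hγ₁).of_nonneg_of_le (fun t => ?_) (fun t => ?_)
  all_goals simp only [smul_pow, Matrix.smul_apply, smul_eq_mul]
  · exact mul_nonneg (pow_nonneg hγ₀ t) (nonneg_of_mem_rowStochastic (pow_mem hP t))
  · exact mul_le_of_le_one_right (pow_nonneg hγ₀ t) (le_one_of_mem_rowStochastic (pow_mem hP t))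

theorem inv_one_sub_smul_eq_tsum (hP : P ∈ rowStochastic ℝ n) (hγ₀ : 0 ≤ γ) (hγ₁ : γ < 1) :
    (1 - γ • P)⁻¹ = ∑' t : ℕ, (γ • P) ^ t :=
  inv_eq_left_inv (summable_pow_smul_of_mem_rowStochastic hP hγ₀ hγ₁).tsum_pow_mul_one_sub

theorem hasSum_pow_smul_of_mem_rowStochastic (hP : P ∈ rowStochastic ℝ n) (hγ₀ : 0 ≤ γ)
    (hγ₁ : γ < 1) : HasSum (fun t : ℕ => (γ • P) ^ t) (1 - γ • P)⁻¹ :=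
  inv_one_sub_smul_eq_tsum hP hγ₀ hγ₁ ▸ (summable_pow_smul_of_mem_rowStochastic hP hγ₀ hγ₁).hasSum

theorem inv_one_sub_smul_mulVec_mulVec (hP : P ∈ rowStochastic ℝ n) (hγ₀ : 0 ≤ γ)
    (hγ₁ : γ < 1) (v : n → ℝ) : (1 - γ • P)⁻¹ *ᵥ ((1 - γ • P) *ᵥ v) = v := by
  rw [mulVec_mulVec, inv_one_sub_smul_eq_tsum hP hγ₀ hγ₁,
    (summable_pow_smul_of_mem_rowStochastic hP hγ₀ hγ₁).tsum_pow_mul_one_sub, one_mulVec]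

theorem smul_inv_one_sub_smul_mulVec_one (hP : P ∈ rowStochastic ℝ n) (hγ₀ : 0 ≤ γ)
    (hγ₁ : γ < 1) : (1 - γ) • ((1 - γ • P)⁻¹ *ᵥ 1) = 1 := by
  have h : (1 - γ • P) *ᵥ 1 = (1 - γ) • (1 : n → ℝ) := by
    rw [sub_mulVec, one_mulVec, smul_mulVec, one_vecMul_of_mem_rowStochastic hP, sub_smul,
      one_smul]
  rw [← mulVec_smul, ← h, inv_one_sub_smul_mulVec_mulVec hP hγ₀ hγ₁]

end Resolvent

namespace FinMDP

variable {M : FinMDP} {π q : M.S → M.A → ℝ}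

theorem IsPolicy.isDist (hπ : M.IsPolicy π) (s : M.S) : IsDist (π s) :=
  ⟨hπ.1 s, hπ.2 s⟩

theorem Pmat_mem_rowStochastic (hM : M.Valid) (hπ : M.IsPolicy π) :
    M.Pmat π ∈ rowStochastic ℝ M.S := by
  refine mem_rowStochastic_iff_sum.2 ⟨fun s s' => ?_, fun s => ?_⟩
  · exact sum_nonneg fun a _ => mul_nonneg (hπ.1 s a) (hM.1 s a s')
  · simp only [Pmat, of_apply]
    rw [sum_comm]
    simp only [← mul_sum, hM.2.1, mul_one, hπ.2]

theorem V_eq_inv_mulVec (hM : M.Valid) (hπ : M.IsPolicy π) :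
    M.V π = (1 - M.γ • M.Pmat π)⁻¹ *ᵥ M.rPol π := by
  funext s
  have h := Pi.hasSum.1 ((hasSum_pow_smul_of_mem_rowStochastic (Pmat_mem_rowStochastic hM hπ)
    hM.2.2.2.1 hM.2.2.2.2).map (mulVec.addMonoidHomLeft (M.rPol π))
    (continuous_id.matrix_mulVec continuous_const)) s
  refine HasSum.tsum_eq (h.congr_fun fun t => ?_)
  simp [mulVec.addMonoidHomLeft, smul_pow, smul_mulVec]

theorem dvisit_eq (hM : M.Valid) (hπ : M.IsPolicy π) (s₀ s : M.S) :
    M.dvisit π s₀ s = (1 - M.γ) * (1 - M.γ • M.Pmat π)⁻¹ s₀ s := by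
  have h := Pi.hasSum.1 (Pi.hasSum.1 (hasSum_pow_smul_of_mem_rowStochastic
    (Pmat_mem_rowStochastic hM hπ) hM.2.2.2.1 hM.2.2.2.2) s₀) s
  rw [dvisit, HasSum.tsum_eq (h.congr_fun fun t => ?_)]
  simp [smul_pow]

theorem dvisitD_eq (hM : M.Valid) (hπ : M.IsPolicy π) (ρ : M.S → ℝ) :
    M.dvisitD π ρ = (1 - M.γ) • (ρ ᵥ* (1 - M.γ • M.Pmat π)⁻¹) := by
  funext s
  simp only [dvisitD, dvisit_eq hM hπ, Pi.smul_apply, smul_eq_mul, vecMul, dotProduct, mul_sum]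
  exact sum_congr rfl fun s₀ _ => by ring

theorem isDist_dvisitD (hM : M.Valid) (hπ : M.IsPolicy π) {ρ : M.S → ℝ} (hρ : IsDist ρ) :
    IsDist (M.dvisitD π ρ) := by
  have hP := Pmat_mem_rowStochastic hM hπ
  refine ⟨fun s => sum_nonneg fun s₀ _ => mul_nonneg (hρ.1 s₀) ?_, ?_⟩
  · exact mul_nonneg (sub_nonneg.2 hM.2.2.2.2.le) (tsum_nonneg fun t =>
      mul_nonneg (pow_nonneg hM.2.2.2.1 t) (nonneg_of_mem_rowStochastic (pow_mem hP t)))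
  · rw [← dotProduct_one, dvisitD_eq hM hπ, smul_dotProduct, ← dotProduct_mulVec,
      ← dotProduct_smul, smul_inv_one_sub_smul_mulVec_one hP hM.2.2.2.1 hM.2.2.2.2,
      dotProduct_one, hρ.2]

theorem sum_mul_Adv (hq : ∀ s, ∑ a, q s a = 1) (p : M.S → M.A → ℝ) (s : M.S) :
    ∑ a, q s a * M.Adv p s a = (M.rPol q - (1 - M.γ • M.Pmat q) *ᵥ M.V p : M.S → ℝ) s := by
  rw [sub_mulVec, one_mulVec, smul_mulVec]
  simp only [Adv, Qf, rPol, Pmat, Pi.sub_apply, Pi.smul_apply, smul_eq_mul, mulVec, dotProduct,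
    of_apply, mul_sub, mul_add, sum_sub_distrib, sum_add_distrib, ← sum_mul, hq s, one_mul]
  rw [sub_sub_eq_add_sub]
  congr 2
  simp only [mul_sum, sum_mul]
  rw [sum_comm]
  exact sum_congr rfl fun _ _ => sum_congr rfl fun _ _ => by ring

theorem performance_difference (hM : M.Valid) (hq : M.IsPolicy q) (p : M.S → M.A → ℝ)
    (ρ : M.S → ℝ) :
    ∑ s, M.dvisitD q ρ s * ∑ a, q s a * M.Adv p s a = (1 - M.γ) * (M.Vd q ρ - M.Vd p ρ) := by
  have hP := Pmat_mem_rowStochastic hM hq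
  simp only [sum_mul_Adv hq.2 p]
  change M.dvisitD q ρ ⬝ᵥ (M.rPol q - (1 - M.γ • M.Pmat q) *ᵥ M.V p) =
    (1 - M.γ) * (ρ ⬝ᵥ M.V q - ρ ⬝ᵥ M.V p)
  rw [dvisitD_eq hM hq, smul_dotProduct, ← dotProduct_mulVec, mulVec_sub,
    inv_one_sub_smul_mulVec_mulVec hP hM.2.2.2.1 hM.2.2.2.2, ← V_eq_inv_mulVec hM hq,
    dotProduct_sub, smul_eq_mul]

theorem mul_Vd_sub_le_expectedKL_sub (hM : M.Valid) (hq : M.IsPolicy q) {ρ : M.S → ℝ}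
    (hρ : IsDist ρ) {p p' G : M.S → M.A → ℝ} {η c : ℝ}
    (h : ∀ s a, η * (G s a - c) ≤ Real.log (p' s a) - Real.log (p s a)) :
    η * ((1 - M.γ) * (M.Vd q ρ - M.Vd p ρ)) ≤
      expectedKL (M.dvisitD q ρ) q p - expectedKL (M.dvisitD q ρ) q p' +
        η * (stateActionMean (M.dvisitD q ρ) q (fun s a => M.Adv p s a - G s a) + c) := by
  have hd := isDist_dvisitD hM hq hρ
  have hmean := stateActionMean_mono hd.1 hq.1 h
  rw [stateActionMean_mul_sub_const hd hq.2] at hmean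
  have hpd : (1 - M.γ) * (M.Vd q ρ - M.Vd p ρ) = stateActionMean (M.dvisitD q ρ) q (M.Adv p) :=
    (performance_difference hM hq p ρ).symm
  rw [hpd, stateActionMean_sub (M.Adv p) G, expectedKL_sub_expectedKL]
  linarith

end FinMDP

/-- **NPG regret lemma.** -/
theorem npg_regret_lemma (M : FinMDP) (hM : M.Valid) (d : ℕ)
    (π : EuclideanSpace ℝ (Fin d) → M.S → M.A → ℝ)
    (hpolicy : ∀ ϑ, M.IsPolicy (π ϑ)) (hpospol : ∀ ϑ s a, 0 < π ϑ s a)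
    (β : ℝ) (hβ : 0 ≤ β)
    (hdiff : ∀ s a, Differentiable ℝ (fun ϑ : EuclideanSpace ℝ (Fin d) =>
        Real.log (π ϑ s a)))
    (hsmooth : ∀ (s : M.S) (a : M.A) (ϑ ϑ' : EuclideanSpace ℝ (Fin d)),
        ‖gradient (fun ϑ'' => Real.log (π ϑ'' s a)) ϑ -
            gradient (fun ϑ'' => Real.log (π ϑ'' s a)) ϑ'‖ ≤ β * ‖ϑ - ϑ'‖)
    -- the comparison policy `π̃` and starting state distribution `ρ`
    (πtil : M.S → M.A → ℝ) (hπtil : M.IsPolicy πtil)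
    (ρ : M.S → ℝ) (hρ : IsDist ρ)
    (η W : ℝ) (hη : 0 < η)
    (θ w : ℕ → EuclideanSpace ℝ (Fin d))
    (h0 : ∀ s a, π (θ 0) s a = 1 / (Fintype.card M.A : ℝ))
    (hupd : ∀ t, θ (t + 1) = θ t + η • w t)
    (hW : ∀ t, ‖w t‖ ≤ W)
    (err : ℕ → ℝ)
    (herr : ∀ t, err t = ∑ s, M.dvisitD πtil ρ s * ∑ a, πtil s a *
        (M.Adv (π (θ t)) s a -
          ⟪w t, gradient (fun ϑ => Real.log (π ϑ s a)) (θ t)⟫_ℝ))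
    (T : ℕ) (hT : 0 < T) :
    ∃ t < T, M.Vd πtil ρ - M.Vd (π (θ t)) ρ ≤
      (1 / (1 - M.γ)) * (Real.log (Fintype.card M.A) / (η * T) +
        η * β * W ^ 2 / 2 + (1 / T) * ∑ t ∈ Finset.range T, err t) := by
  have hd := FinMDP.isDist_dvisitD hM hπtil hρ
  have herr' : ∀ t, err t = stateActionMean (M.dvisitD πtil ρ) πtil fun s a =>
      M.Adv (π (θ t)) s a - ⟪w t, gradient (fun ϑ => Real.log (π ϑ s a)) (θ t)⟫_ℝ := herr
  have hΦ₀ : expectedKL (M.dvisitD πtil ρ) πtil (π (θ 0)) ≤ Real.log (Fintype.card M.A) := by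
    rw [show π (θ 0) = fun _ _ => 1 / (Fintype.card M.A : ℝ) from funext₂ h0]
    exact expectedKL_uniform_le hd hπtil.isDist
  obtain ⟨t, ht, hle⟩ := exists_lt_le_of_potential_decrease
    (u := fun t => (1 - M.γ) * (M.Vd πtil ρ - M.Vd (π (θ t)) ρ)) (e := err)
    (c := η * β * W ^ 2 / 2) hη hT
    (fun t => expectedKL_nonneg hd.1 hπtil.isDist (hpolicy _).isDist (hpospol _)) hΦ₀
    fun t => by
      rw [herr' t]
      exact FinMDP.mul_Vd_sub_le_expectedKL_sub hM hπtil hρ fun s a => hupd t ▸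
        mul_inner_gradient_sub_le_of_lipschitz (hdiff s a) (hsmooth s a) hβ hη.le (θ t) (hW t)
  refine ⟨t, ht, ?_⟩
  rw [one_div, inv_mul_eq_div, le_div_iff₀ (sub_pos.2 hM.2.2.2.2)]
  linarith
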